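/- arXiv:1803.01451 — 3 statements merged into one kernel-verified Lean document; each statement's English description precedes it below -/
import Mathlib

section
/- If a base heuristic H is sequentially improving, then the rollout string (x̃_1,...,x̃_i) generated by H satisfies F(x̃_1,...,x̃_i) ≤ H_0, where H_0 is the cost of the string produced by applying H from the empty partial string; that is, the rollout algorithm never performs worse than its base heuristic. -/
/-- If a base heuristic `H` (assigning to each partial string `xs` of length `≤ i`
a completion `H xs` of length `i - xs.length`, with heuristic cost
`H_α(xs) = F (xs ++ H xs)`) is sequentially improving, then the rollout string `X`
generated by `H` satisfies `F X ≤ H_0 = F (H [])`: the rollout algorithm never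
performs worse than its base heuristic. -/
theorem seqImproving_rollout_no_worse {A : Type*} [Fintype A] [Nonempty A]
    (i : ℕ) (hi : 1 ≤ i) (F : List A → ℝ) (H : List A → List A)
    (hlen : ∀ xs : List A, xs.length ≤ i → (H xs).length = i - xs.length)
    (himp : ∀ xs : List A, xs.length < i →
      (⨅ x : A, F ((xs ++ [x]) ++ H (xs ++ [x]))) ≤ F (xs ++ H xs))
    (X : List A) (hX : X.length = i)
    (hroll : ∀ α : ℕ, α < i →
      F (X.take (α + 1) ++ H (X.take (α + 1))) =
        ⨅ x : A, F ((X.take α ++ [x]) ++ H (X.take α ++ [x]))) :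
    F X ≤ F (([] : List A) ++ H []) := by
  have key : ∀ α, α ≤ i → F (X.take α ++ H (X.take α)) ≤ F (([] : List A) ++ H []) := by
    intro α
    induction α with
    | zero => intro _; simp
    | succ α ih =>
      intro hα
      have hαi : α < i := Nat.lt_of_succ_le hα
      have hlt : (X.take α).length < i := by
        simp [List.length_take, hX]
        omega
      calc F (X.take (α + 1) ++ H (X.take (α + 1)))
          = ⨅ x : A, F ((X.take α ++ [x]) ++ H (X.take α ++ [x])) := hroll α hαi
        _ ≤ F (X.take α ++ H (X.take α)) := himp _ hlt
        _ ≤ F (([] : List A) ++ H []) := ih (le_of_lt hαi)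
  have hHX : H X = [] := by
    have := hlen X (le_of_eq hX)
    rw [hX, Nat.sub_self] at this
    exact List.length_eq_zero_iff.mp this
  have hXtake : X.take i = X := by
    rw [← hX]; exact List.take_length (l := X)
  have := key i le_rfl
  rwa [hXtake, hHX, List.append_nil] at this
end

section
/- If a base heuristic H is sequentially consistent, then the rollout algorithm RH is sequentially improving with respect to H and outperforms H: the rollout string (x̃_1,...,x̃_i) generated by H satisfies F(x̃_1,...,x̃_i) ≤ H_0, where H_0 is the cost of the string produced by applying H from the empty partial string. -/
/-- If a base heuristic `H` (assigning to each partial string `xs` of length `≤ i`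
a completion `H xs` of length `i - xs.length`, with heuristic cost
`H_α(xs) = F (xs ++ H xs)`) is sequentially consistent, then the rollout algorithm
is sequentially improving with respect to `H` and outperforms `H`: the rollout
string `X` generated by `H` satisfies `F X ≤ H_0 = F (H [])`. -/
theorem seqConsistent_rollout_outperforms {A : Type*} [Fintype A] [Nonempty A]
    (i : ℕ) (hi : 1 ≤ i) (F : List A → ℝ) (H : List A → List A)
    (hlen : ∀ xs : List A, xs.length ≤ i → (H xs).length = i - xs.length)
    (hcons : ∀ (xs : List A) (y : A) (rest : List A), xs.length < i →
      H xs = y :: rest → H (xs ++ [y]) = rest)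
    (X : List A) (hX : X.length = i)
    (hroll : ∀ α : ℕ, α < i →
      F (X.take (α + 1) ++ H (X.take (α + 1))) =
        ⨅ x : A, F ((X.take α ++ [x]) ++ H (X.take α ++ [x]))) :
    F X ≤ F (([] : List A) ++ H []) := by
  have key : ∀ α : ℕ, α ≤ i →
      F (X.take α ++ H (X.take α)) ≤ F (([] : List A) ++ H []) := by
    intro α
    induction α with
    | zero => intro _; simp
    | succ n ih =>
      intro hn
      have hni : n < i := hn
      have hlenn : (X.take n).length = n := by
        simp [hX, Nat.le_of_lt hni]
      -- H (X.take n) is nonempty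
      have hHlen : (H (X.take n)).length = i - n := by
        rw [hlen _ (by omega), hlenn]
      obtain ⟨y, rest, hyr⟩ : ∃ y rest, H (X.take n) = y :: rest := by
        cases h : H (X.take n) with
        | nil => rw [h] at hHlen; simp at hHlen; omega
        | cons a l => exact ⟨a, l, rfl⟩
      have hrest : H (X.take n ++ [y]) = rest := hcons _ y rest (by omega) hyr
      have hstep : F (X.take (n + 1) ++ H (X.take (n + 1))) ≤
          F (X.take n ++ H (X.take n)) := by
        rw [hroll n hni]
        have hb : BddBelow (Set.range fun x : A =>
            F ((X.take n ++ [x]) ++ H (X.take n ++ [x]))) :=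
          (Set.finite_range _).bddBelow
        calc ⨅ x : A, F ((X.take n ++ [x]) ++ H (X.take n ++ [x]))
            ≤ F ((X.take n ++ [y]) ++ H (X.take n ++ [y])) := ciInf_le hb y
          _ = F (X.take n ++ H (X.take n)) := by rw [hrest, hyr]; simp
      exact hstep.trans (ih (by omega))
  have hHX : H X = [] := by
    have := hlen X (by omega)
    simpa [hX] using List.length_eq_zero_iff.mp (by omega)
  have := key i le_rfl
  rwa [List.take_of_length_le (by omega), hHX, List.append_nil] at this
end

section
/- If a base heuristic H is sequentially consistent, then the cost of the rollout string provides an upper bound on the optimal objective value that is at least as tight as the bound obtained from the base heuristic alone: min over all strings (x_1,...,x_i) ∈ A^i of F(x_1,...,x_i) ≤ F(x̃_1,...,x̃_i) ≤ H_0, where (x̃_1,...,x̃_i) is the rollout string generated by H and H_0 is the cost of the string produced by applying H from the empty partial string. -/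
/-- If a base heuristic `H` (assigning to each partial string `xs` of length `≤ i`
a completion `H xs` of length `i - xs.length`, with heuristic cost
`H_α(xs) = F (xs ++ H xs)`) is sequentially consistent, then the cost of the rollout
string `X` generated by `H` provides an upper bound on the optimal objective value
that is at least as tight as the bound from the base heuristic alone:
`min_{Y ∈ A^i} F Y ≤ F X ≤ H_0 = F (H [])`. -/
theorem seqConsistent_rollout_tighter_bound {A : Type*} [Fintype A] [Nonempty A]
    (i : ℕ) (hi : 1 ≤ i) (F : List A → ℝ) (H : List A → List A)
    (hlen : ∀ xs : List A, xs.length ≤ i → (H xs).length = i - xs.length)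
    (hcons : ∀ (xs : List A) (y : A) (rest : List A), xs.length < i →
      H xs = y :: rest → H (xs ++ [y]) = rest)
    (X : List A) (hX : X.length = i)
    (hroll : ∀ α : ℕ, α < i →
      F (X.take (α + 1) ++ H (X.take (α + 1))) =
        ⨅ x : A, F ((X.take α ++ [x]) ++ H (X.take α ++ [x]))) :
    sInf { r : ℝ | ∃ Y : List A, Y.length = i ∧ r = F Y } ≤ F X ∧
      F X ≤ F (([] : List A) ++ H []) := by
  have hset : { r : ℝ | ∃ Y : List A, Y.length = i ∧ r = F Y } =
      F '' {Y : List A | Y.length = i} := by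
    ext r; simp [eq_comm]
  constructor
  · apply csInf_le
    · rw [hset]
      exact ((List.finite_length_eq A i).image F).bddBelow
    · exact ⟨X, hX, rfl⟩
  · -- define g α = F (X.take α ++ H (X.take α))
    set g : ℕ → ℝ := fun α => F (X.take α ++ H (X.take α)) with hg
    have hstep : ∀ α, α < i → g (α + 1) ≤ g α := by
      intro α hα
      have hlt : (X.take α).length = α := by
        simp [hX, Nat.le_of_lt hα]
      have hnonnil : H (X.take α) ≠ [] := by
        intro h
        have := hlen (X.take α) (by omega)
        rw [h] at this
        simp [hlt] at this
        omega
      obtain ⟨y, rest, hyr⟩ := List.exists_cons_of_ne_nil hnonnil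
      have hkey : g α = F ((X.take α ++ [y]) ++ H (X.take α ++ [y])) := by
        rw [hcons (X.take α) y rest (by omega) hyr]
        simp [hg, hyr]
      have h2 : g (α + 1) = ⨅ x : A, F ((X.take α ++ [x]) ++ H (X.take α ++ [x])) :=
        hroll α hα
      rw [h2, hkey]
      exact ciInf_le (Finite.bddBelow_range _) y
    have hmono : ∀ α, α ≤ i → g α ≤ g 0 := by
      intro α
      induction α with
      | zero => intro _; exact le_refl _
      | succ n ih =>
        intro h
        exact le_trans (hstep n (by omega)) (ih (by omega))
    have hgi : g i = F X := by
      have h1 : X.take i = X := by simp [hX]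
      have h2 : H X = [] := by
        have := hlen X (by omega)
        rw [hX] at this
        simpa using List.eq_nil_of_length_eq_zero (by simpa using this)
      simp [hg, h1, h2]
    have hg0 : g 0 = F (([] : List A) ++ H []) := by simp [hg]
    rw [← hgi, ← hg0]
    exact hmono i (le_refl i)
end
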